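/- arXiv:2406.05512 — 3 statements merged into one kernel-verified Lean document; each statement's English description precedes it below -/
import Mathlib

section
/- Let n be divisible by k with n/k odd, and let v_{k+1} be the eigenvector of the path graph Laplacian L_n for eigenvalue λ_{k+1} = 2(1 - cos(kπ/n)), with components v_{k+1}(p) = cos(kπ(p-1/2)/n). Then for j in {1,...,n}, v_{k+1}(j) = 0 if and only if j = ((2i-1)n + k)/(2k) for some i ∈ {1,...,k}. -/
open Real

/-!
`cos x` vanishes exactly at the odd multiples of `π / 2`, so the `j`-th component vanishes iff
`k (2j + 1) = (2m + 1) n` for some integer `m`. Since `0 ≤ k (2j + 1) < 2kn`, such an `m` lies in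
`[0, k)`, and `i = m + 1` is the index of the centre.
-/

theorem cos_mul_pi_div_eq_zero_iff {a b : ℝ} (hb : b ≠ 0) :
    cos (a * π / (2 * b)) = 0 ↔ ∃ m : ℤ, a = (2 * m + 1) * b := by
  rw [cos_eq_zero_iff]
  refine exists_congr fun m => ?_
  rw [div_eq_iff (mul_ne_zero two_ne_zero hb)]
  constructor
  · intro h
    apply mul_right_cancel₀ pi_ne_zero
    linarith
  · intro h
    rw [h]
    field_simp

theorem exists_int_odd_mul_eq_iff {n k j : ℕ} (hj : j < n) :
    (∃ m : ℤ, (k * (2 * j + 1) : ℤ) = (2 * m + 1) * n) ↔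
      ∃ i : ℕ, 1 ≤ i ∧ i ≤ k ∧ 2 * k * (j + 1) = (2 * i - 1) * n + k := by
  constructor
  · rintro ⟨m, hm⟩
    have hm0 : 0 ≤ m := by nlinarith
    have hmk : m < k := by nlinarith
    lift m to ℕ using hm0
    refine ⟨m + 1, le_add_self, by omega, ?_⟩
    rw [show 2 * (m + 1) - 1 = 2 * m + 1 by omega]
    zify
    linear_combination hm
  · rintro ⟨i, hi, -, h⟩
    refine ⟨i - 1, ?_⟩
    zify [show 1 ≤ 2 * i by omega] at h
    linear_combination h

theorem kth_eigenvector_zero_iff_k_centers_general (n k : ℕ) (j : Fin n) :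
    Real.cos ((k : ℝ) * Real.pi * ((j : ℕ) + 1/2) / n) = 0 ↔
      ∃ i : ℕ, 1 ≤ i ∧ i ≤ k ∧ 2 * k * ((j : ℕ) + 1) = (2 * i - 1) * n + k := by
  have hn : (n : ℝ) ≠ 0 := Nat.cast_ne_zero.mpr j.pos.ne'
  have harg : (k : ℝ) * π * ((j : ℕ) + 1/2) / n = (k * (2 * (j : ℕ) + 1)) * π / (2 * n) := by
    field_simp
  rw [harg, cos_mul_pi_div_eq_zero_iff hn, ← exists_int_odd_mul_eq_iff j.isLt]
  exact_mod_cast Iff.rfl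

/-- For `k ∣ n` with `n/k` odd, the eigenvector `v_{k+1}` of the path graph Laplacian,
with `p`-th component `cos (kπ (p - 1/2) / n)` (`p = 1, ..., n`; zero-based `j : Fin n`
stands for `p - 1`), vanishes at `j` iff `j + 1 = ((2i-1)n + k) / (2k)` for some
`i ∈ {1, ..., k}`, i.e. iff `2k (j + 1) = (2i - 1) n + k` for some such `i`. -/
theorem kth_eigenvector_zero_iff_k_centers (n k : ℕ) (hk : 0 < k) (hdvd : k ∣ n)
    (hodd : Odd (n / k)) (j : Fin n) :
    Real.cos ((k : ℝ) * Real.pi * ((j : ℕ) + 1/2) / n) = 0 ↔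
      ∃ i : ℕ, 1 ≤ i ∧ i ≤ k ∧ 2 * k * ((j : ℕ) + 1) = (2 * i - 1) * n + k :=
  kth_eigenvector_zero_iff_k_centers_general n k j
end

section
/- The characteristic polynomial det(sI + L_n) of the negated path graph Laplacian satisfies: the constant coefficient is 0, the coefficient of s is n, the coefficient of s² is n(n²-1)/6, and the coefficient of s^{n-1} is 2(n-1), with leading coefficient 1. -/
/-!
`X • 1 + L_n` is tridiagonal, so its determinant satisfies the three-term recurrence obtained by
expanding along the last row. The same expansion for `D k = det (X • 1 + L'_k)`, where `L'_k` has
diagonal `(1, 2, …, 2)`, gives `D (k + 2) = (X + 2) D (k + 1) - D k`, and Pascal's rule shows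
that this recurrence is solved by `[X ^ j] D k = C(k + j, 2j)`. Since `L_n` and `L'_n` differ
only in the last diagonal entry, `det (X • 1 + L_n) = D n - D (n - 1)`, whose coefficient of
`X ^ (j + 1)` is `C(n + j, 2j + 1)` and whose constant coefficient is `1 - 1`.
-/

open Real Polynomial

/-- The Laplacian matrix of the path graph on `n` vertices:
tridiagonal with diagonal `(1, 2, ..., 2, 1)` and off-diagonal entries `-1`. -/
def pathLaplacian (n : ℕ) : Matrix (Fin n) (Fin n) ℝ :=
  Matrix.of fun i j =>
    if (i : ℕ) = (j : ℕ) then (if (i : ℕ) = 0 ∨ (i : ℕ) = n - 1 then 1 else 2)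
    else if (i : ℕ) + 1 = (j : ℕ) ∨ (j : ℕ) + 1 = (i : ℕ) then -1 else 0

namespace Matrix

variable {R : Type*} [CommRing R]

def tridiag (a b c : ℕ → R) (n : ℕ) : Matrix (Fin n) (Fin n) R :=
  of fun i j =>
    if (i : ℕ) = j then a i
    else if (i : ℕ) + 1 = j then b i
    else if (j : ℕ) + 1 = i then c j
    else 0

variable (a b c : ℕ → R)

theorem tridiag_submatrix_castSucc (n : ℕ) :
    (tridiag a b c (n + 1)).submatrix Fin.castSucc Fin.castSucc = tridiag a b c n := by
  ext i j
  simp [tridiag]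

theorem tridiag_congr {a' : ℕ → R} {n : ℕ} (h : ∀ i < n, a i = a' i) :
    tridiag a b c n = tridiag a' b c n := by
  ext i j
  simp only [tridiag, of_apply]
  split_ifs <;> simp [h i i.isLt]

theorem det_succ_of_col_last_eq_zero {n : ℕ} (M : Matrix (Fin (n + 1)) (Fin (n + 1)) R)
    (hM : ∀ i : Fin n, M i.castSucc (Fin.last n) = 0) :
    M.det = M (Fin.last n) (Fin.last n) * (M.submatrix Fin.castSucc Fin.castSucc).det := by
  rw [det_succ_column M (Fin.last n), Fin.sum_univ_castSucc]
  simp [hM]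

theorem det_tridiag_succ_succ (n : ℕ) :
    (tridiag a b c (n + 2)).det =
      a (n + 1) * (tridiag a b c (n + 1)).det - b n * c n * (tridiag a b c n).det := by
  rw [det_succ_row _ (Fin.last (n + 1)), Fin.sum_univ_castSucc, Fin.sum_univ_castSucc]
  have hfar : ∀ j : Fin n, tridiag a b c (n + 2) (Fin.last (n + 1)) j.castSucc.castSucc = 0 := by
    intro j
    simp only [tridiag, of_apply]
    split_ifs <;> simp_all <;> omega
  have hminor : ((tridiag a b c (n + 2)).submatrix Fin.castSucc
      (Fin.last n).castSucc.succAbove).det = b n * (tridiag a b c n).det := by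
    rw [det_succ_of_col_last_eq_zero]
    · congr 1
      · simp [tridiag]
      · congr 1
        ext i j
        simp [tridiag]
    · intro i
      have := i.isLt
      simp only [submatrix_apply, Fin.succAbove_castSucc_self, tridiag, of_apply, Fin.val_castSucc,
        Fin.val_succ, Fin.val_last]
      split_ifs <;> first | rfl | omega
  have hdiag : tridiag a b c (n + 2) (Fin.last (n + 1)) (Fin.last (n + 1)) = a (n + 1) := by
    simp [tridiag]
  have hsub : tridiag a b c (n + 2) (Fin.last (n + 1)) (Fin.last n).castSucc = c n := by
    simp [tridiag]
    omega
  have heven : (-1 : R) ^ (n + 1 + (n + 1)) = 1 := Even.neg_one_pow ⟨n + 1, rfl⟩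
  have hodd : (-1 : R) ^ (n + 1 + n) = -1 := Odd.neg_one_pow ⟨n, by ring⟩
  simp only [hfar, hdiag, hsub, hminor, heven, hodd, Fin.succAbove_last, tridiag_submatrix_castSucc,
    Fin.val_last, Fin.val_castSucc, mul_zero, zero_mul, Finset.sum_const_zero]
  ring

theorem charmatrix_neg_tridiag (n : ℕ) :
    charmatrix (-tridiag a b c n) =
      tridiag (fun i => X + C (a i)) (fun i => C (b i)) (fun i => C (c i)) n := by
  ext i j : 1
  by_cases hij : i = j
  · subst hij
    simp [charmatrix_apply_eq, tridiag]
  · have hij' : (i : ℕ) ≠ j := Fin.val_ne_of_ne hij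
    simp [charmatrix_apply_ne _ _ _ hij, tridiag, hij']
    split_ifs <;> simp

theorem charpoly_neg_tridiag_succ_succ (n : ℕ) :
    (-tridiag a b c (n + 2)).charpoly =
      (X + C (a (n + 1))) * (-tridiag a b c (n + 1)).charpoly -
        C (b n * c n) * (-tridiag a b c n).charpoly := by
  simp only [charpoly, charmatrix_neg_tridiag, det_tridiag_succ_succ, map_mul]

end Matrix

open Matrix

theorem Nat.choose_add_two_add_choose (N r : ℕ) :
    (N + 2).choose (r + 2) + N.choose (r + 2) = N.choose r + 2 * (N + 1).choose (r + 2) := by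
  simp only [Nat.choose_succ_succ']
  ring

theorem Nat.cast_choose_three {K : Type*} [Field K] [CharZero K] (a : ℕ) :
    (a.choose 3 : K) = a * (a - 1) * (a - 2) / 6 := by
  induction a with
  | zero => simp
  | succ a ih =>
    rw [Nat.choose_succ_succ', Nat.cast_add, ih, Nat.cast_choose_two]
    push_cast
    ring

section ReducedPathLaplacian

variable (R : Type*) [CommRing R]

/-- The Laplacian of the path on `k + 1` vertices with an end vertex deleted, the remaining
vertices listed from the other end. -/
def reducedPathLaplacian (k : ℕ) : Matrix (Fin k) (Fin k) R :=
  tridiag (fun i => if i = 0 then 1 else 2) (fun _ => -1) (fun _ => -1) k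

theorem charpoly_neg_reducedPathLaplacian_succ_succ (k : ℕ) :
    (-reducedPathLaplacian R (k + 2)).charpoly =
      (X + 2) * (-reducedPathLaplacian R (k + 1)).charpoly -
        (-reducedPathLaplacian R k).charpoly := by
  have h := charpoly_neg_tridiag_succ_succ (fun i => if i = 0 then (1 : R) else 2)
    (fun _ => -1) (fun _ => -1) k
  simpa [reducedPathLaplacian, map_ofNat] using h

theorem coeff_charpoly_neg_reducedPathLaplacian (k j : ℕ) :
    (-reducedPathLaplacian R k).charpoly.coeff j = ((k + j).choose (2 * j) : R) := by
  induction k using Nat.twoStepInduction generalizing j with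
  | zero =>
    rcases j with _ | j
    · simp
    · rw [Nat.choose_eq_zero_of_lt (by omega)]
      simp [coeff_one]
  | one =>
    have h : (-reducedPathLaplacian R 1).charpoly = X + 1 := by
      simp [charpoly, reducedPathLaplacian, tridiag]
    rcases j with _ | _ | j
    · simp [h]
    · simp [h, coeff_one]
    · rw [h, Nat.choose_eq_zero_of_lt (by omega)]
      simp [coeff_X, coeff_one]
  | more k ih₀ ih₁ =>
    rw [charpoly_neg_reducedPathLaplacian_succ_succ]
    rcases j with _ | j
    · simp [ih₀, ih₁]
      norm_num
    · have hpascal :=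
        congrArg (Nat.cast (R := R)) (Nat.choose_add_two_add_choose (k + j + 1) (2 * j))
      push_cast at hpascal
      simp only [coeff_sub, add_mul, coeff_add, coeff_X_mul, coeff_ofNat_mul, ih₀, ih₁]
      rw [show k + 1 + j = k + j + 1 by ring, show k + 1 + (j + 1) = k + j + 1 + 1 by ring,
        show k + (j + 1) = k + j + 1 by ring, show k + 2 + (j + 1) = k + j + 1 + 2 by ring,
        show 2 * (j + 1) = 2 * j + 2 by ring]
      linear_combination -hpascal

end ReducedPathLaplacian

theorem pathLaplacian_eq_tridiag (n : ℕ) :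
    pathLaplacian n =
      tridiag (fun i => if i = 0 ∨ i = n - 1 then 1 else 2) (fun _ => -1) (fun _ => -1) n := by
  ext i j
  simp only [pathLaplacian, tridiag, of_apply]
  split_ifs <;> first | rfl | omega

/-- Expanded along the last row, `pathLaplacian (k + 2)` differs from
`reducedPathLaplacian ℝ (k + 2)` only in the corner entry, `1` instead of `2`. -/
theorem charpoly_neg_pathLaplacian (k : ℕ) :
    (-pathLaplacian (k + 2)).charpoly =
      (-reducedPathLaplacian ℝ (k + 2)).charpoly -
        (-reducedPathLaplacian ℝ (k + 1)).charpoly := by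
  have hdiag : ∀ m ≤ k + 1, ∀ i < m,
      (if i = 0 ∨ i = k + 2 - 1 then (1 : ℝ) else 2) = if i = 0 then 1 else 2 := by
    intro m hm i hi
    split_ifs <;> first | rfl | omega
  rw [pathLaplacian_eq_tridiag, charpoly_neg_tridiag_succ_succ,
    tridiag_congr _ _ _ (hdiag (k + 1) le_rfl), tridiag_congr _ _ _ (hdiag k (by omega)),
    charpoly_neg_reducedPathLaplacian_succ_succ]
  simp [reducedPathLaplacian]
  ring

theorem coeff_zero_charpoly_neg_pathLaplacian (k : ℕ) :
    (-pathLaplacian (k + 2)).charpoly.coeff 0 = 0 := by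
  simp [charpoly_neg_pathLaplacian, coeff_charpoly_neg_reducedPathLaplacian]

theorem coeff_succ_charpoly_neg_pathLaplacian (k j : ℕ) :
    (-pathLaplacian (k + 2)).charpoly.coeff (j + 1) = ((k + 2 + j).choose (2 * j + 1) : ℝ) := by
  rw [charpoly_neg_pathLaplacian, coeff_sub, coeff_charpoly_neg_reducedPathLaplacian,
    coeff_charpoly_neg_reducedPathLaplacian, sub_eq_iff_eq_add',
    show k + 2 + (j + 1) = k + 2 + j + 1 by ring, show k + 1 + (j + 1) = k + 2 + j by ring,
    show 2 * (j + 1) = 2 * j + 1 + 1 by ring, Nat.choose_succ_succ' (k + 2 + j)]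
  push_cast
  ring

/-- The characteristic polynomial `det(sI + L_n)` of the negated path graph Laplacian:
its constant coefficient is `0`, the coefficient of `s` is `n`, the coefficient of `s²`
is `n(n²-1)/6`, the coefficient of `s^{n-1}` is `2(n-1)`, and it is monic. -/
theorem neg_path_laplacian_charpoly_coeffs (n : ℕ) (hn : 2 ≤ n) :
    (-(pathLaplacian n)).charpoly.coeff 0 = 0 ∧
    (-(pathLaplacian n)).charpoly.coeff 1 = n ∧
    (-(pathLaplacian n)).charpoly.coeff 2 = (n : ℝ) * ((n : ℝ) ^ 2 - 1) / 6 ∧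
    (-(pathLaplacian n)).charpoly.coeff (n - 1) = 2 * ((n : ℝ) - 1) ∧
    (-(pathLaplacian n)).charpoly.Monic := by
  obtain ⟨k, rfl⟩ : ∃ k, n = k + 2 := ⟨n - 2, by omega⟩
  refine ⟨coeff_zero_charpoly_neg_pathLaplacian k, ?_, ?_, ?_, charpoly_monic _⟩
  · simp [coeff_succ_charpoly_neg_pathLaplacian k 0]
  · rw [coeff_succ_charpoly_neg_pathLaplacian k 1, Nat.cast_choose_three]
    push_cast
    ring
  · rw [show k + 2 - 1 = k + 1 by omega, coeff_succ_charpoly_neg_pathLaplacian,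
      show k + 2 + k = 2 * k + 1 + 1 by ring, Nat.choose_succ_self_right]
    push_cast
    ring
end

section
/- Let n be odd and consider the function g(p) = Σ_{j=2}^{n} [(π(j-1)/n)² · cos(π(j-1)(2p-1)/n)] / [sin²(π(j-1)/(2n)) · N_j], where N_j = Σ_{i=1}^{n} cos²(π(j-1)(2i-1)/(2n)). Then g((n+1)/2) > 0; equivalently, Σ_{j=2}^{n} (-1)^{j-1}(π(j-1)/n)² / [sin²(π(j-1)/(2n)) · N_j] > 0. -/
/-!
For `1 ≤ k < n` the cosines `cos (π k (2i - 1) / n)`, `i = 1, …, n`, sum to zero, so every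
normalisation `N_{k+1}` equals `n / 2` and the `(k+1)`-st term of the sum is
`(-1)^k · (8 / n) · (x_k / sin x_k)²` with `x_k = π k / (2n) ∈ (0, π/2)`. Since `x / sin x`
increases on `(0, π)` (the secant slopes `sin x / x` of the concave `sin` decrease), the terms
`k = 2l + 1, 2l + 2` pair up to positive contributions; `n` odd makes the pairing exhaust the sum.
-/

open Real Finset

theorem sum_Icc_neg_one_pow_mul_pos {R : Type*} [CommRing R] [LinearOrder R]
    [IsStrictOrderedRing R] {f : ℕ → R} {m : ℕ} (hm : 0 < m)
    (hf : StrictMonoOn f (Set.Icc 1 (2 * m))) :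
    0 < ∑ k ∈ Icc 1 (2 * m), (-1) ^ k * f k := by
  induction m with
  | zero => omega
  | succ m ih =>
    have hpair : f (2 * m + 1) < f (2 * m + 1 + 1) :=
      hf ⟨by omega, by omega⟩ ⟨by omega, by omega⟩ (by omega)
    have hrest : 0 ≤ ∑ k ∈ Icc 1 (2 * m), (-1) ^ k * f k := by
      rcases m.eq_zero_or_pos with rfl | hm
      · simp
      · exact (ih hm (hf.mono (Set.Icc_subset_Icc_right (by omega)))).le
    rw [show 2 * (m + 1) = 2 * m + 1 + 1 by ring, sum_Icc_succ_top (by omega),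
      sum_Icc_succ_top (by omega), (Odd.neg_one_pow ⟨m, rfl⟩ : (-1 : R) ^ (2 * m + 1) = -1),
      (Even.neg_one_pow ⟨m + 1, by ring⟩ : (-1 : R) ^ (2 * m + 1 + 1) = 1)]
    linarith

theorem sin_div_lt_sin_div {x y : ℝ} (hx : 0 < x) (hxy : x < y) (hy : y ≤ π) :
    sin y / y < sin x / x := by
  simpa using strictConcaveOn_sin_Icc.secant_strict_mono (a := 0) ⟨le_rfl, pi_pos.le⟩
    ⟨hx.le, hxy.le.trans hy⟩ ⟨hx.le.trans hxy.le, hy⟩ hx.ne' (hx.trans hxy).ne' hxy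

theorem div_sin_pos {x : ℝ} (hx : x ∈ Set.Ioo 0 π) : 0 < x / sin x :=
  div_pos hx.1 (sin_pos_of_pos_of_lt_pi hx.1 hx.2)

theorem strictMonoOn_div_sin : StrictMonoOn (fun x => x / sin x) (Set.Ioo 0 π) := by
  intro x hx y hy hxy
  show x / sin x < y / sin y
  rw [← inv_div, ← inv_div (sin y),
    inv_lt_inv₀ (div_pos (sin_pos_of_pos_of_lt_pi hx.1 hx.2) hx.1)
      (div_pos (sin_pos_of_pos_of_lt_pi hy.1 hy.2) hy.1)]
  exact sin_div_lt_sin_div hx.1 hxy hy.2.le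

theorem sum_range_cos_odd_mul_eq_zero {n k : ℕ} (hk : 0 < k) (hkn : k < n) :
    ∑ i ∈ range n, cos (π * k * (2 * i + 1) / n) = 0 := by
  have hn : (0 : ℝ) < n := by exact_mod_cast hk.trans hkn
  have hsin : sin (π * k / n) ≠ 0 := by
    refine (sin_pos_of_pos_of_lt_pi (by positivity) ?_).ne'
    rw [div_lt_iff₀ hn]
    exact mul_lt_mul_of_pos_left (by exact_mod_cast hkn) pi_pos
  have h := sin_mul_sum_cos n (2 * π * k / n) (π * k / n)
  rw [show n * (2 * π * k / n) / 2 = (k : ℕ) * π by field_simp, sin_nat_mul_pi, zero_mul,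
    show 2 * π * k / n / 2 = π * k / n by ring] at h
  convert (mul_eq_zero.1 h).resolve_left hsin using 2 with i
  ring_nf

theorem sum_Icc_cos_sq_eq_half {n k : ℕ} (hk : 0 < k) (hkn : k < n) :
    ∑ i ∈ Icc 1 n, cos (π * k * (2 * i - 1) / (2 * n)) ^ 2 = n / 2 := by
  have hterm : ∀ i : ℕ, cos (π * k * (2 * ((1 + i : ℕ) : ℝ) - 1) / (2 * n)) ^ 2 =
      1 / 2 + cos (π * k * (2 * i + 1) / n) / 2 := by
    intro i
    rw [cos_sq]
    push_cast
    ring_nf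
  rw [← Finset.Ico_add_one_right_eq_Icc, sum_Ico_eq_sum_range, Nat.add_sub_cancel]
  simp_rw [hterm]
  rw [sum_add_distrib, ← sum_div, ← sum_div, sum_range_cos_odd_mul_eq_zero hk hkn]
  simp

/-- For odd `n ≥ 3`, with `N_j = ∑_{i=1}^n cos²(π(j-1)(2i-1)/(2n))`, the sum
`∑_{j=2}^n (-1)^{j-1} (π(j-1)/n)² / (sin²(π(j-1)/(2n)) · N_j)` is positive.
This is (up to a positive factor) the second derivative, at the physical center
`p = (n+1)/2`, of the second-order term of the smallest eigenvalue of the perturbed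
path Laplacian as a function of a real port position `p`. -/
theorem second_derivative_positive_at_center (n : ℕ) (hn : 3 ≤ n) (hodd : Odd n) :
    0 < ∑ j ∈ Finset.Icc 2 n,
        (-1 : ℝ) ^ (j - 1) * (Real.pi * ((j : ℝ) - 1) / n) ^ 2 /
          ((Real.sin (Real.pi * ((j : ℝ) - 1) / (2 * n))) ^ 2 *
            (∑ i ∈ Finset.Icc 1 n,
              (Real.cos (Real.pi * ((j : ℝ) - 1) * (2 * (i : ℝ) - 1) / (2 * n))) ^ 2)) := by
  obtain ⟨m, hm⟩ := hodd
  have hangle : ∀ k : ℕ, 0 < k → k < 2 * n → π * k / (2 * n) ∈ Set.Ioo 0 π :=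
    fun k hk hkn => ⟨by positivity, (div_lt_iff₀ (by positivity)).2
      (mul_lt_mul_of_pos_left (by exact_mod_cast hkn) pi_pos)⟩
  have hf : StrictMonoOn (fun k : ℕ => 8 / n * (π * k / (2 * n) / sin (π * k / (2 * n))) ^ 2)
      (Set.Icc 1 (2 * m)) := by
    intro a ha b hb hab
    have hx := hangle a (by grind) (by grind)
    dsimp only
    gcongr 8 / n * ?_
    exact pow_lt_pow_left₀ (strictMonoOn_div_sin hx (hangle b (by grind) (by grind)) (by gcongr))
      (div_sin_pos hx).le two_ne_zero
  rw [show Icc 2 n = (Icc 1 (2 * m)).map (addRightEmbedding 1) by rw [map_add_right_Icc, hm],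
    sum_map]
  refine (sum_Icc_neg_one_pow_mul_pos (by omega) hf).trans_eq (sum_congr rfl fun k hk => ?_)
  rw [mem_Icc] at hk
  have hsin := (div_sin_pos (hangle k (by omega) (by omega))).ne'
  simp only [addRightEmbedding_apply, Nat.add_sub_cancel]
  push_cast
  rw [add_sub_cancel_right, sum_Icc_cos_sq_eq_half (n := n) (k := k) (by omega) (by omega)]
  field_simp
  ring
end
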